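/- arXiv:1811.04663 — 4 statements merged into one kernel-verified Lean document; each statement's English description precedes it below -/
import Mathlib

section
/- The GFDM modulation matrix A = G · (I_M ⊗ W_N), where G is the block circulant matrix built from Ψ_m = diag{g[mN],…,g[mN+N−1]}, factorizes as A = P^T U_M D̄ U_M^H P U_N, where U_M = I_N ⊗ W_M, U_N = I_M ⊗ W_N, P is the permutation matrix with p_{l,q}=1 iff q=(l mod M)N+⌊l/M⌋, and D̄ is diagonal with D̄(r,r) = Σ_{m=0}^{M−1} g[mN + ⌊r/M⌋] ω^{m(r mod M)}, ω = e^{2πi/M}. -/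
/-!
Reindex `Fin (M * N)` by `r ↦ (r mod M, ⌊r/M⌋)`. Then `U_M` and `D̄` are block diagonal, with
blocks `W_M` and `diag (dft v_q)` for `v_q m = g[mN + q]`, so `U_M D̄ U_Mᴴ` is block diagonal with
blocks `W_M diag (dft v_q) W_Mᴴ = circulant v_q` by orthogonality of the characters
`p ↦ e^{2πi cp/M}`. Conjugating by `P` turns this reindexing into `r ↦ (⌊r/N⌋, r mod N)`, and in
those coordinates `G`, whose `(i, j)` block is `Ψ_{(i - j) mod M}`, is block diagonal with the same
circulant blocks.
-/

open Matrix Complex BigOperators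

noncomputable section

namespace GFDM

variable {M N : ℕ}

lemma left_pos (i : Fin (M * N)) : 0 < M := by
  rcases Nat.eq_zero_or_pos M with h | h
  · subst h; exact absurd i.isLt (by simp)
  · exact h

lemma right_pos (i : Fin (M * N)) : 0 < N := by
  rcases Nat.eq_zero_or_pos N with h | h
  · subst h; exact absurd i.isLt (by simp)
  · exact h

/-- block index when splitting `Fin (M*N)` into `M` blocks of length `N` -/
def divN (i : Fin (M * N)) : Fin M :=
  ⟨(i : ℕ) / N, Nat.div_lt_of_lt_mul (Nat.lt_of_lt_of_le i.isLt (Nat.le_of_eq (Nat.mul_comm M N)))⟩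

def modN (i : Fin (M * N)) : Fin N :=
  ⟨(i : ℕ) % N, Nat.mod_lt _ (right_pos i)⟩

/-- block index when splitting `Fin (M*N)` into `N` blocks of length `M` -/
def divM (i : Fin (M * N)) : Fin N :=
  ⟨(i : ℕ) / M, Nat.div_lt_of_lt_mul i.isLt⟩

def modM (i : Fin (M * N)) : Fin M :=
  ⟨(i : ℕ) % M, Nat.mod_lt _ (left_pos i)⟩

/-- normalized `K`-point IDFT matrix, entries `(1/√K) e^{2πi jk/K}` -/
def W (K : ℕ) : Matrix (Fin K) (Fin K) ℂ :=
  fun j k => ((1 / Real.sqrt K : ℝ) : ℂ) *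
    Complex.exp (2 * Real.pi * Complex.I * ((j : ℕ) : ℂ) * ((k : ℕ) : ℂ) / (K : ℂ))

/-- the perfect-shuffle permutation matrix `P` with `p_{l,q} = 1` iff
`q = (l mod M)·N + ⌊l/M⌋` -/
def P (M N : ℕ) : Matrix (Fin (M * N)) (Fin (M * N)) ℂ :=
  fun l q => if (q : ℕ) = ((l : ℕ) % M) * N + (l : ℕ) / M then 1 else 0

lemma shuffle_lt (l : Fin (M * N)) : ((l : ℕ) % M) * N + (l : ℕ) / M < M * N := by
  have h1 : (l : ℕ) % M < M := Nat.mod_lt _ (left_pos l)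
  have h2 : (l : ℕ) / M < N := Nat.div_lt_of_lt_mul l.isLt
  calc ((l : ℕ) % M) * N + (l : ℕ) / M < ((l : ℕ) % M) * N + N := Nat.add_lt_add_left h2 _
    _ = ((l : ℕ) % M + 1) * N := by ring
    _ ≤ M * N := Nat.mul_le_mul_right _ h1

lemma shuffle'_lt (i : Fin (M * N)) : ((i : ℕ) % N) * M + (i : ℕ) / N < M * N := by
  have h1 : (i : ℕ) % N < N := Nat.mod_lt _ (right_pos i)
  have h2 : (i : ℕ) / N < M := Nat.div_lt_of_lt_mul (Nat.lt_of_lt_of_le i.isLt (Nat.le_of_eq (Nat.mul_comm M N)))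
  calc ((i : ℕ) % N) * M + (i : ℕ) / N < ((i : ℕ) % N) * M + M := Nat.add_lt_add_left h2 _
    _ = ((i : ℕ) % N + 1) * M := by ring
    _ ≤ N * M := Nat.mul_le_mul_right _ h1
    _ = M * N := Nat.mul_comm N M

/-- the index map `l ↦ (l mod M)·N + ⌊l/M⌋` underlying `P` -/
def shuffle (l : Fin (M * N)) : Fin (M * N) :=
  ⟨((l : ℕ) % M) * N + (l : ℕ) / M, shuffle_lt l⟩

/-- the index map `i ↦ (i mod N)·M + ⌊i/N⌋` underlying `Pᵀ` -/
def shuffle' (i : Fin (M * N)) : Fin (M * N) :=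
  ⟨((i : ℕ) % N) * M + (i : ℕ) / N, shuffle'_lt i⟩

/-- Kronecker product `A ⊗ B` of an `M×M` and an `N×N` matrix, flattened on
`Fin (M*N)` via `l ↔ (⌊l/N⌋, l mod N)` -/
def kron (A : Matrix (Fin M) (Fin M) ℂ) (B : Matrix (Fin N) (Fin N) ℂ) :
    Matrix (Fin (M * N)) (Fin (M * N)) ℂ :=
  fun i j => A (divN i) (divN j) * B (modN i) (modN j)

/-- Kronecker product `B ⊗ A` of an `N×N` and an `M×M` matrix, flattened on
`Fin (M*N)` via `l ↔ (⌊l/M⌋, l mod M)` -/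
def kron' (B : Matrix (Fin N) (Fin N) ℂ) (A : Matrix (Fin M) (Fin M) ℂ) :
    Matrix (Fin (M * N)) (Fin (M * N)) ℂ :=
  fun i j => B (divM i) (divM j) * A (modM i) (modM j)

/-- `U_M = I_N ⊗ W_M`, block diagonal with `N` copies of `W_M` -/
def UM (M N : ℕ) : Matrix (Fin (M * N)) (Fin (M * N)) ℂ :=
  kron' (1 : Matrix (Fin N) (Fin N) ℂ) (W M)

/-- `U_N = I_M ⊗ W_N`, block diagonal with `M` copies of `W_N` -/
def UN (M N : ℕ) : Matrix (Fin (M * N)) (Fin (M * N)) ℂ :=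
  kron (1 : Matrix (Fin M) (Fin M) ℂ) (W N)

/-- `F_b = W_M ⊗ I_N` -/
def Fb (M N : ℕ) : Matrix (Fin (M * N)) (Fin (M * N)) ℂ :=
  kron (W M) (1 : Matrix (Fin N) (Fin N) ℂ)

/-- the block circulant matrix `G` with `(i,j)`-th `N×N` block
`Ψ_{(i−j) mod M}`, `Ψ_m = diag{g[mN],…,g[mN+N−1]}` -/
def Gmat (M N : ℕ) (g : ℕ → ℂ) : Matrix (Fin (M * N)) (Fin (M * N)) ℂ :=
  fun i j =>
    if (i : ℕ) % N = (j : ℕ) % N then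
      g (((((i : ℕ) / N) + M - (j : ℕ) / N) % M) * N + (i : ℕ) % N)
    else 0

/-- block diagonal matrix whose `q`-th `N×N` block is
`D_q = Σ_{m<M} ω^{−qm} Ψ_m`, `ω = e^{2πi/M}` -/
def Dmat (M N : ℕ) (g : ℕ → ℂ) : Matrix (Fin (M * N)) (Fin (M * N)) ℂ :=
  fun i j =>
    if (i : ℕ) / N = (j : ℕ) / N then
      ∑ m ∈ Finset.range M,
        Complex.exp (-(2 * Real.pi * Complex.I * (m : ℂ) * (((i : ℕ) / N : ℕ) : ℂ)) / (M : ℂ)) *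
          (if (i : ℕ) % N = (j : ℕ) % N then g (m * N + (i : ℕ) % N) else 0)
    else 0

/-- `λ(r) = Σ_{m<M} g[mN + (r mod N)] e^{−2πi m ⌊r/N⌋ / M}` -/
def lam (M N : ℕ) (g : ℕ → ℂ) (r : ℕ) : ℂ :=
  ∑ m ∈ Finset.range M,
    g (m * N + r % N) *
      Complex.exp (-(2 * Real.pi * Complex.I * (m : ℂ) * ((r / N : ℕ) : ℂ)) / (M : ℂ))

/-- the diagonal matrix `D̄` with
`D̄(r,r) = Σ_{m<M} g[mN + ⌊r/M⌋] e^{−2πi m (r mod M)/M}` -/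
def Dbar (M N : ℕ) (g : ℕ → ℂ) : Matrix (Fin (M * N)) (Fin (M * N)) ℂ :=
  Matrix.diagonal fun r : Fin (M * N) =>
    ∑ m ∈ Finset.range M,
      g (m * N + (r : ℕ) / M) *
        Complex.exp (-(2 * Real.pi * Complex.I * (m : ℂ) * (((r : ℕ) % M : ℕ) : ℂ)) / (M : ℂ))

/-- the GFDM modulation matrix `A = G · (I_M ⊗ W_N)` -/
def Amat (M N : ℕ) (g : ℕ → ℂ) : Matrix (Fin (M * N)) (Fin (M * N)) ℂ :=
  Gmat M N g * UN M N

lemma idx_lt (m : Fin M) (k : Fin N) : (m : ℕ) * N + (k : ℕ) < M * N := by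
  calc (m : ℕ) * N + (k : ℕ) < (m : ℕ) * N + N := Nat.add_lt_add_left k.isLt _
    _ = ((m : ℕ) + 1) * N := by ring
    _ ≤ M * N := Nat.mul_le_mul_right _ m.isLt

/-- flattened data index: `(m,k) ↦ mN + k` -/
def idx (m : Fin M) (k : Fin N) : Fin (M * N) :=
  ⟨(m : ℕ) * N + (k : ℕ), idx_lt m k⟩

open scoped Real

section Circulant

variable {K : ℕ}

lemma sum_exp_two_pi_I_mul_eq_ite (hK : 0 < K) (c : ℤ) :
    ∑ p : Fin K, exp (2 * π * I * c * ((p : ℕ) : ℂ) / K) = if (K : ℤ) ∣ c then (K : ℂ) else 0 := by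
  set ζ := exp (2 * π * I / K)
  have hζ : IsPrimitiveRoot ζ K := Complex.isPrimitiveRoot_exp K hK.ne'
  have hterm : ∀ p : ℕ, exp (2 * π * I * c * p / K) = (ζ ^ c) ^ p := by
    intro p
    rw [← zpow_natCast, ← _root_.zpow_mul, ← Complex.exp_int_mul]
    push_cast
    ring_nf
  simp only [hterm, Fin.sum_univ_eq_sum_range (fun p => (ζ ^ c) ^ p)]
  split_ifs with h
  · simp [(hζ.zpow_eq_one_iff_dvd c).2 h]
  · have hζc : ζ ^ c ≠ 1 := mt (hζ.zpow_eq_one_iff_dvd c).1 h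
    rw [geom_sum_eq hζc, ← zpow_natCast, ← _root_.zpow_mul, mul_comm, _root_.zpow_mul, zpow_natCast,
      hζ.pow_eq_one, _root_.one_zpow, sub_self, zero_div]

lemma intCast_dvd_sub_sub_iff (x y m : Fin K) : (K : ℤ) ∣ (x : ℤ) - y - m ↔ m = x - y := by
  have hsub : (((x - y : Fin K) : ℕ) : ℤ) = ((x : ℤ) - y) % K := by
    rw [Fin.val_sub, Int.natCast_mod, Nat.cast_add, Nat.cast_sub y.isLt.le,
      show (K : ℤ) - y + x = (x - y) + K * 1 by ring, Int.add_mul_emod_self_left]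
  rw [← Int.modEq_iff_dvd, Int.ModEq, Int.emod_eq_of_lt (by positivity) (by exact_mod_cast m.isLt),
    ← hsub, Fin.ext_iff, Nat.cast_inj]

def dft (v : Fin K → ℂ) (p : Fin K) : ℂ :=
  ∑ m, v m * exp (-(2 * π * I * ((m : ℕ) : ℂ) * ((p : ℕ) : ℂ)) / K)

lemma star_W (j k : Fin K) :
    star (W K j k) =
      ((1 / √K : ℝ) : ℂ) * exp (-(2 * π * I * ((j : ℕ) : ℂ) * ((k : ℕ) : ℂ)) / K) := by
  rw [W, star_mul', Complex.star_def, Complex.conj_ofReal, ← Complex.exp_conj]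
  simp [map_div₀, neg_div, map_ofNat]

lemma W_mul_exp_mul_star_W (x y m p : Fin K) :
    W K x p * exp (-(2 * π * I * ((m : ℕ) : ℂ) * ((p : ℕ) : ℂ)) / K) * star (W K y p)
      = (K : ℂ)⁻¹ * exp (2 * π * I * (((x : ℤ) - y - m : ℤ) : ℂ) * ((p : ℕ) : ℂ) / K) := by
  have hsqrt : ((1 / √K : ℝ) : ℂ) * ((1 / √K : ℝ) : ℂ) = (K : ℂ)⁻¹ := by
    rw [← Complex.ofReal_mul, div_mul_div_comm, one_mul, Real.mul_self_sqrt K.cast_nonneg]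
    push_cast
    exact one_div _
  rw [star_W, W]
  calc _ = ((1 / √K : ℝ) : ℂ) * ((1 / √K : ℝ) : ℂ) *
        (exp (2 * π * I * ((x : ℕ) : ℂ) * ((p : ℕ) : ℂ) / K) *
          exp (-(2 * π * I * ((m : ℕ) : ℂ) * ((p : ℕ) : ℂ)) / K) *
          exp (-(2 * π * I * ((y : ℕ) : ℂ) * ((p : ℕ) : ℂ)) / K)) := by ring
    _ = _ := by
      rw [hsqrt, ← Complex.exp_add, ← Complex.exp_add]
      congr 2
      push_cast
      ring

theorem W_mul_diagonal_dft_mul_conjTranspose (v : Fin K → ℂ) :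
    W K * diagonal (dft v) * (W K)ᴴ = circulant v := by
  ext x y
  have hK : (K : ℂ) ≠ 0 := Nat.cast_ne_zero.2 x.pos.ne'
  have hterm : ∀ p m : Fin K,
      W K x p * (v m * exp (-(2 * π * I * ((m : ℕ) : ℂ) * ((p : ℕ) : ℂ)) / K)) * star (W K y p)
        = (K : ℂ)⁻¹ * v m * exp (2 * π * I * (((x : ℤ) - y - m : ℤ) : ℂ) * ((p : ℕ) : ℂ) / K) := by
    intro p m
    linear_combination v m * W_mul_exp_mul_star_W x y m p
  calc (W K * diagonal (dft v) * (W K)ᴴ) x y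
      = ∑ m, (K : ℂ)⁻¹ * v m *
          ∑ p : Fin K, exp (2 * π * I * (((x : ℤ) - y - m : ℤ) : ℂ) * ((p : ℕ) : ℂ) / K) := by
        rw [mul_apply]
        simp only [mul_diagonal, conjTranspose_apply, dft, Finset.mul_sum, Finset.sum_mul, hterm]
        exact Finset.sum_comm
    _ = ∑ m, if m = x - y then v m else 0 := by
        refine Finset.sum_congr rfl fun m _ => ?_
        simp only [sum_exp_two_pi_I_mul_eq_ite x.pos, intCast_dvd_sub_sub_iff]
        split_ifs
        · field_simp
        · simp
    _ = circulant v x y := by simp [circulant_apply]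

end Circulant

def modDivEquiv : Fin (M * N) ≃ Fin M × Fin N :=
  (finCongr (mul_comm M N)).trans (finProdFinEquiv.symm.trans (Equiv.prodComm _ _))

lemma modDivEquiv_apply (r : Fin (M * N)) : modDivEquiv r = (modM r, divM r) := by
  ext <;> simp [modDivEquiv, modM, divM]

lemma UM_eq_submatrix :
    UM M N = (blockDiagonal fun _ : Fin N => W M).submatrix modDivEquiv modDivEquiv := by
  ext i j
  simp only [UM, kron', submatrix_apply, modDivEquiv_apply, blockDiagonal_apply, one_apply]
  split_ifs <;> simp

lemma Dbar_eq_submatrix (g : ℕ → ℂ) :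
    Dbar M N g =
      (blockDiagonal fun q : Fin N => diagonal (dft fun m : Fin M => g (m * N + q))).submatrix
        modDivEquiv modDivEquiv := by
  rw [blockDiagonal_diagonal, submatrix_diagonal_equiv, Dbar]
  congr 1
  funext r
  simp only [Function.comp_apply, modDivEquiv_apply, dft]
  exact (Fin.sum_univ_eq_sum_range (fun m => g (m * N + r / M) *
    exp (-(2 * π * I * (m : ℂ) * (((r : ℕ) % M : ℕ) : ℂ)) / M)) M).symm

lemma Gmat_eq_submatrix (g : ℕ → ℂ) :
    Gmat M N g =
      (blockDiagonal fun q : Fin N => circulant fun m : Fin M => g (m * N + q)).submatrix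
        finProdFinEquiv.symm finProdFinEquiv.symm := by
  ext i j
  have hj : (j : ℕ) / N < M := j.divNat.isLt
  simp only [Gmat, submatrix_apply, finProdFinEquiv_symm_apply, blockDiagonal_apply,
    circulant_apply, Fin.ext_iff, Fin.coe_modNat, Fin.val_sub, Fin.coe_divNat]
  split_ifs
  · rw [Nat.add_sub_assoc hj.le, Nat.add_comm ((i : ℕ) / N)]
  · rfl

lemma P_eq_toMatrix : P M N = (modDivEquiv.trans finProdFinEquiv).toPEquiv.toMatrix := by
  ext l q
  simp only [P, PEquiv.toMatrix_apply, Equiv.toPEquiv_apply, Option.mem_def, Option.some.injEq,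
    Fin.ext_iff, Equiv.trans_apply, modDivEquiv_apply, finProdFinEquiv_apply_val, modM, divM]
  congr 1
  exact propext ⟨fun h => by rw [h]; ring, fun h => by rw [← h]; ring⟩

lemma transpose_toMatrix_mul_mul_toMatrix {ι κ α : Type*} [Fintype ι] [DecidableEq ι]
    [DecidableEq κ] [Semiring α] (σ : ι ≃ κ) (X : Matrix ι ι α) :
    (σ.toPEquiv.toMatrix : Matrix ι κ α)ᵀ * X * (σ.toPEquiv.toMatrix : Matrix ι κ α) =
      X.submatrix σ.symm σ.symm := by
  rw [← PEquiv.toMatrix_symm, ← Equiv.toPEquiv_symm, PEquiv.toMatrix_toPEquiv_mul,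
    PEquiv.mul_toMatrix_toPEquiv, submatrix_submatrix]
  rfl

theorem Gmat_eq_conj (g : ℕ → ℂ) :
    Gmat M N g = (P M N)ᵀ * (UM M N * Dbar M N g * (UM M N)ᴴ) * P M N := by
  rw [UM_eq_submatrix, Dbar_eq_submatrix, conjTranspose_submatrix, submatrix_mul_equiv,
    submatrix_mul_equiv, blockDiagonal_conjTranspose, ← blockDiagonal_mul, ← blockDiagonal_mul]
  simp only [W_mul_diagonal_dft_mul_conjTranspose]
  rw [P_eq_toMatrix, transpose_toMatrix_mul_mul_toMatrix, submatrix_submatrix, Gmat_eq_submatrix]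
  congr <;> ext r <;> simp

theorem stmt7_general (M N : ℕ) (g : ℕ → ℂ) :
    Amat M N g = (P M N)ᵀ * UM M N * Dbar M N g * (UM M N)ᴴ * P M N * UN M N := by
  rw [Amat, Gmat_eq_conj]
  simp only [Matrix.mul_assoc]

/-- Theorem 1: `A = Pᵀ U_M D̄ U_Mᴴ P U_N` with
`D̄(r,r) = Σ_{m<M} g[mN + ⌊r/M⌋] e^{−2πi m (r mod M)/M}`. -/
theorem stmt7 (M N : ℕ) (hM : 0 < M) (hN : 0 < N) (g : ℕ → ℂ) :
    Amat M N g = (P M N)ᵀ * UM M N * Dbar M N g * (UM M N)ᴴ * P M N * UN M N :=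
  stmt7_general M N g

end GFDM
end
end

section
/- Let A be the GFDM modulation matrix with columns A_{m,k} = T_m M_k g, where (M_k g)[n] = g[n] e^{2πi nk/N} and (T_m g)[n] = g[(n − mN) mod MN]. Then A equals G · (I_M ⊗ W_N) up to the normalization 1/√N, i.e., the GFDM transmit signal x[n] = (1/√N) Σ_{m=0}^{M−1} Σ_{k=0}^{N−1} d_{m,k} g[(n−mN) mod MN] e^{2πi nk/N} can be written as x = G (I_M ⊗ W_N) d, with G the block circulant matrix with (i,j)-block Ψ_{(i−j) mod M}, Ψ_m = diag{g[mN],…,g[mN+N−1]}. -/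
open Matrix Complex BigOperators

noncomputable section

namespace GFDM

variable {M N : ℕ}

/-!
Column `mN + k` of `G (I_M ⊗ W_N)` is computed entrywise: the block-diagonal factor selects
block column `m` of `G`, whose only nonzero entry in row `n` lies in column `mN + (n mod N)` and
equals `g[((⌊n/N⌋ - m) mod M) N + n mod N] = g[(n - mN) mod MN]`, while the surviving IDFT entry
`e^{2πi (n mod N) k / N}` equals `e^{2πi n k / N}` because the exponential is `N`-periodic in `n`.
-/

lemma idx_eq_finProdFinEquiv (m : Fin M) (k : Fin N) : idx m k = finProdFinEquiv (m, k) :=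
  Fin.ext <| by simp only [idx, finProdFinEquiv_apply_val]; ring

lemma sum_eq_sum_sum_idx {β : Type*} [AddCommMonoid β] (f : Fin (M * N) → β) :
    ∑ i, f i = ∑ m, ∑ k, f (idx m k) := by
  simp only [← finProdFinEquiv.sum_comp, Fintype.sum_prod_type, idx_eq_finProdFinEquiv]

lemma modN_val (i : Fin (M * N)) : (modN i : ℕ) = (i : ℕ) % N := rfl

lemma divN_idx (m : Fin M) (k : Fin N) : divN (idx m k) = m := by
  change (finProdFinEquiv.symm (idx m k)).1 = m
  rw [idx_eq_finProdFinEquiv, Equiv.symm_apply_apply]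

lemma modN_idx (m : Fin M) (k : Fin N) : modN (idx m k) = k := by
  change (finProdFinEquiv.symm (idx m k)).2 = k
  rw [idx_eq_finProdFinEquiv, Equiv.symm_apply_apply]

lemma UN_apply_idx (m m' : Fin M) (k k' : Fin N) :
    UN M N (idx m' k') (idx m k) = if m' = m then W N k' k else 0 := by
  simp [UN, kron, one_apply, divN_idx, modN_idx]

lemma Gmat_apply_idx (g : ℕ → ℂ) (n : Fin (M * N)) (m : Fin M) (k : Fin N) :
    Gmat M N g n (idx m k) =
      if modN n = k then g ((((n : ℕ) / N + M - m) % M) * N + (n : ℕ) % N) else 0 := by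
  have hdiv : ((idx m k : Fin (M * N)) : ℕ) / N = m := congrArg Fin.val (divN_idx m k)
  have hmod : ((idx m k : Fin (M * N)) : ℕ) % N = k := congrArg Fin.val (modN_idx m k)
  rw [Gmat, hdiv, hmod]
  exact if_congr (Fin.val_inj (a := modN n)) rfl rfl

lemma add_mul_sub_mul_mod (n : ℕ) {m : ℕ} (hm : m ≤ M) :
    (n + M * N - m * N) % (M * N) = ((n / N + M - m) % M) * N + n % N := by
  rcases N.eq_zero_or_pos with rfl | hN
  · simp
  have hdecomp : n + M * N - m * N = N * (n / N + (M - m)) + n % N := by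
    have := Nat.div_add_mod n N
    rw [Nat.mul_add, Nat.mul_sub, Nat.mul_comm N M, Nat.mul_comm N m]
    have := Nat.mul_le_mul_right N hm
    omega
  rw [hdecomp, Nat.mul_comm M N, Nat.mod_mul, Nat.mul_add_mod, Nat.mod_mod,
    Nat.mul_add_div hN, Nat.div_eq_of_lt (Nat.mod_lt n hN), Nat.add_zero, ← Nat.add_sub_assoc hm]
  ring

lemma exp_two_pi_I_mul_mod (n k N : ℕ) :
    cexp (2 * Real.pi * I * n * k / N) = cexp (2 * Real.pi * I * (n % N : ℕ) * k / N) := by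
  rcases N.eq_zero_or_pos with rfl | hN
  · simp
  have hN' : (N : ℂ) ≠ 0 := Nat.cast_ne_zero.mpr hN.ne'
  have hsplit : 2 * Real.pi * I * n * k / N =
      2 * Real.pi * I * (n % N : ℕ) * k / N + (n / N * k : ℕ) * (2 * Real.pi * I) := by
    conv_lhs => rw [← Nat.mod_add_div n N]
    push_cast
    field_simp
  rw [hsplit, Complex.exp_add, Complex.exp_nat_mul_two_pi_mul_I, mul_one]

lemma Gmat_mul_UN_apply_idx (g : ℕ → ℂ) (n : Fin (M * N)) (m : Fin M) (k : Fin N) :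
    (Gmat M N g * UN M N) n (idx m k) =
      ((1 / Real.sqrt N : ℝ) : ℂ) * g (((n : ℕ) + M * N - m * N) % (M * N)) *
        cexp (2 * Real.pi * I * (n : ℕ) * k / N) := by
  simp only [mul_apply, sum_eq_sum_sum_idx, Gmat_apply_idx, UN_apply_idx, mul_ite, mul_zero,
    ite_mul, zero_mul, Finset.sum_ite_irrel, Finset.sum_const_zero, Fintype.sum_ite_eq',
    Fintype.sum_ite_eq]
  rw [add_mul_sub_mul_mod _ m.isLt.le, exp_two_pi_I_mul_mod (n : ℕ), W, modN_val]
  ring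

theorem stmt15_general (M N : ℕ) (g : ℕ → ℂ)
    (d : Fin (M * N) → ℂ) (n' : Fin (M * N)) :
    ((1 / Real.sqrt (N : ℝ) : ℝ) : ℂ) *
        ∑ m : Fin M, ∑ k : Fin N,
          d (idx m k) * g (((n' : ℕ) + M * N - (m : ℕ) * N) % (M * N)) *
            Complex.exp (2 * Real.pi * Complex.I * ((n' : ℕ) : ℂ) * ((k : ℕ) : ℂ) / (N : ℂ)) =
      ((Gmat M N g * UN M N) *ᵥ d) n' := by
  simp only [mulVec, dotProduct, sum_eq_sum_sum_idx, Gmat_mul_UN_apply_idx, Finset.mul_sum]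
  refine Finset.sum_congr rfl fun m _ => Finset.sum_congr rfl fun k _ => ?_
  ring

/-- the GFDM transmit signal
`x[n] = (1/√N) Σ_m Σ_k d_{m,k} g[(n−mN) mod MN] e^{2πi nk/N}`
equals `(G (I_M ⊗ W_N) d)[n]`. -/
theorem stmt15 (M N : ℕ) (hM : 0 < M) (hN : 0 < N) (g : ℕ → ℂ)
    (d : Fin (M * N) → ℂ) (n' : Fin (M * N)) :
    ((1 / Real.sqrt (N : ℝ) : ℝ) : ℂ) *
        ∑ m : Fin M, ∑ k : Fin N,
          d (idx m k) * g (((n' : ℕ) + M * N - (m : ℕ) * N) % (M * N)) *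
            Complex.exp (2 * Real.pi * Complex.I * ((n' : ℕ) : ℂ) * ((k : ℕ) : ℂ) / (N : ℂ)) =
      ((Gmat M N g * UN M N) *ᵥ d) n' :=
  stmt15_general M N g d n'

end GFDM
end
end

section
/- For the factorization A = Γ_1 D̄ Γ_2 with Γ_1, Γ_2 unitary and D̄ diagonal: A is invertible if and only if every diagonal entry of D̄ is nonzero, i.e., iff λ(r) = Σ_{m=0}^{M−1} g[mN + (r mod N)] e^{−2πi m ⌊r/N⌋/M} ≠ 0 for all 0 ≤ r ≤ MN−1. -/
/-!
Reindexing `Fin (M * N)` as `Fin M × Fin N` turns `G` into a block diagonal matrix whose `N`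
blocks are the circulant `M × M` matrices with first column `(g[mN + k])ₘ`, and turns
`U_N = I_M ⊗ W_N` into a Kronecker product. A circulant matrix is diagonalized by the
Vandermonde matrix of the `M`-th roots of unity, which is invertible since these roots are
distinct; the resulting eigenvalues are exactly the `λ(r)`, so `det G = ∏ᵣ λ(r)`. Likewise `W_N`
is a nonzero multiple of a Vandermonde matrix of distinct roots of unity, so `det U_N ≠ 0`, and
`det A = det G · det U_N`.
-/

open Matrix Complex BigOperators

noncomputable section

section RootsOfUnity

variable {K : Type*} {n : ℕ} {ω : K}

theorem pow_val_add_mul_of_pow_eq_one [Monoid K] (hω : ω ^ n = 1) (a b : Fin n) (q : ℕ) :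
    ω ^ ((a + b : Fin n) * q : ℕ) = ω ^ ((a : ℕ) * q) * ω ^ ((b : ℕ) * q) := by
  simp only [Fin.val_add, mul_comm _ q, pow_mul, ← pow_add]
  exact (pow_eq_pow_mod _ (by rw [← pow_mul, mul_comm, pow_mul, hω, one_pow])).symm

namespace Matrix

variable [Field K]

theorem circulant_mul_vandermonde_pow (hω : IsPrimitiveRoot ω n) (v : Fin n → K) :
    circulant v * vandermonde (fun i : Fin n => ω ^ (i : ℕ)) =
      vandermonde (fun i : Fin n => ω ^ (i : ℕ)) *
        diagonal fun q : Fin n => ∑ d, v d * (ω ^ ((d : ℕ) * q))⁻¹ := by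
  ext i q
  have : NeZero n := ⟨i.pos.ne'⟩
  have hω0 : ω ≠ 0 := hω.ne_zero i.pos.ne'
  have hshift (d : Fin n) :
      ω ^ ((i - d : Fin n) * q : ℕ) = ω ^ ((i : ℕ) * q) * (ω ^ ((d : ℕ) * q))⁻¹ := by
    rw [eq_mul_inv_iff_mul_eq₀ (pow_ne_zero _ hω0),
      ← pow_val_add_mul_of_pow_eq_one hω.pow_eq_one, sub_add_cancel]
  rw [mul_diagonal, mul_apply, Finset.mul_sum]
  simp only [circulant_apply, vandermonde_apply, ← pow_mul]
  rw [← (Equiv.subLeft i).sum_comp]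
  refine Finset.sum_congr rfl fun d _ => ?_
  simp only [Equiv.subLeft_apply, sub_sub_cancel, hshift]
  ring

theorem det_vandermonde_pow_ne_zero (hω : IsPrimitiveRoot ω n) :
    (vandermonde fun i : Fin n => ω ^ (i : ℕ)).det ≠ 0 :=
  det_vandermonde_ne_zero_iff.mpr fun i j h => Fin.ext (hω.pow_inj i.isLt j.isLt h)

theorem det_circulant_eq_prod (hω : IsPrimitiveRoot ω n) (v : Fin n → K) :
    (circulant v).det = ∏ q : Fin n, ∑ d, v d * (ω ^ ((d : ℕ) * q))⁻¹ := by
  have h := congrArg det (circulant_mul_vandermonde_pow hω v)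
  rw [det_mul, det_mul, det_diagonal, mul_comm] at h
  exact mul_left_cancel₀ (det_vandermonde_pow_ne_zero hω) h

end Matrix

end RootsOfUnity

open scoped Kronecker

namespace GFDM

theorem exp_two_pi_I_mul_div (j k K : ℕ) :
    Complex.exp (2 * Real.pi * I * (j : ℂ) * (k : ℂ) / (K : ℂ)) =
      Complex.exp (2 * Real.pi * I / K) ^ (j * k) := by
  rw [← Complex.exp_nat_mul]
  push_cast
  ring_nf

theorem W_eq_smul_vandermonde (K : ℕ) :
    W K = ((1 / Real.sqrt K : ℝ) : ℂ) •
      vandermonde fun j : Fin K => Complex.exp (2 * Real.pi * I / K) ^ (j : ℕ) := by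
  ext j k
  rw [W, Matrix.smul_apply, vandermonde_apply, ← pow_mul, exp_two_pi_I_mul_div, smul_eq_mul]

theorem det_W_ne_zero {K : ℕ} (hK : K ≠ 0) : (W K).det ≠ 0 := by
  rw [W_eq_smul_vandermonde, det_smul]
  refine mul_ne_zero (pow_ne_zero _ ?_)
    (det_vandermonde_pow_ne_zero (Complex.isPrimitiveRoot_exp K hK))
  exact_mod_cast one_div_ne_zero (Real.sqrt_ne_zero'.mpr (by positivity))

variable {M N : ℕ}

theorem finProdFinEquiv_val_mod (p : Fin M × Fin N) : (finProdFinEquiv p : ℕ) % N = p.2 := by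
  rw [finProdFinEquiv_apply_val, Nat.add_mul_mod_self_left, Nat.mod_eq_of_lt p.2.isLt]

theorem finProdFinEquiv_val_div (p : Fin M × Fin N) : (finProdFinEquiv p : ℕ) / N = p.1 := by
  rw [finProdFinEquiv_apply_val, Nat.add_mul_div_left _ _ p.2.pos, Nat.div_eq_of_lt p.2.isLt,
    zero_add]

theorem UN_submatrix_finProdFinEquiv :
    (UN M N).submatrix finProdFinEquiv finProdFinEquiv =
      (1 : Matrix (Fin M) (Fin M) ℂ) ⊗ₖ W N := by
  ext p p'
  have hdiv (p : Fin M × Fin N) : divN (finProdFinEquiv p) = p.1 :=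
    Fin.ext (finProdFinEquiv_val_div p)
  have hmod (p : Fin M × Fin N) : modN (finProdFinEquiv p) = p.2 :=
    Fin.ext (finProdFinEquiv_val_mod p)
  rw [submatrix_apply, UN, kron, hdiv, hdiv, hmod, hmod, kronecker_apply]

theorem det_UN (M N : ℕ) : (UN M N).det = (W N).det ^ M := by
  rw [← det_submatrix_equiv_self finProdFinEquiv, UN_submatrix_finProdFinEquiv, det_kronecker,
    det_one, one_pow, one_mul, Fintype.card_fin]

theorem Gmat_submatrix_finProdFinEquiv (g : ℕ → ℂ) :
    (Gmat M N g).submatrix finProdFinEquiv finProdFinEquiv =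
      blockDiagonal fun k : Fin N => circulant fun d : Fin M => g (d * N + k) := by
  ext ⟨b, k⟩ ⟨b', k'⟩
  simp only [submatrix_apply, Gmat, finProdFinEquiv_val_mod, finProdFinEquiv_val_div,
    blockDiagonal_apply', circulant_apply, Fin.val_sub, Fin.val_inj]
  split_ifs
  · rw [Nat.add_sub_assoc b'.isLt.le, add_comm (b : ℕ)]
  · rfl

theorem det_Gmat (hM : 0 < M) (g : ℕ → ℂ) :
    (Gmat M N g).det = ∏ r : Fin (M * N), lam M N g r := by
  have hω := Complex.isPrimitiveRoot_exp M hM.ne'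
  rw [← det_submatrix_equiv_self finProdFinEquiv, Gmat_submatrix_finProdFinEquiv,
    det_blockDiagonal, ← finProdFinEquiv.prod_comp, Fintype.prod_prod_type, Finset.prod_comm]
  refine Finset.prod_congr rfl fun k _ => ?_
  rw [det_circulant_eq_prod hω]
  refine Finset.prod_congr rfl fun q _ => ?_
  rw [lam, finProdFinEquiv_val_mod, finProdFinEquiv_val_div, ← Fin.sum_univ_eq_sum_range]
  refine Finset.sum_congr rfl fun d _ => ?_
  rw [neg_div, Complex.exp_neg, exp_two_pi_I_mul_div]

/-- `A` is invertible iff `λ(r) ≠ 0` for all `r`. -/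
theorem stmt16 (M N : ℕ) (hM : 0 < M) (hN : 0 < N) (g : ℕ → ℂ) :
    IsUnit (Amat M N g) ↔ ∀ r : Fin (M * N), lam M N g (r : ℕ) ≠ 0 := by
  rw [Amat, isUnit_iff_isUnit_det, det_mul, isUnit_iff_ne_zero, det_Gmat hM, det_UN,
    mul_ne_zero_iff, and_iff_left (pow_ne_zero M (det_W_ne_zero hN.ne')), Finset.prod_ne_zero_iff]
  simp only [Finset.mem_univ, true_implies]

end GFDM
end
end

section
/- Suppose ρ > 0 and D̄ is diagonal with entries d̄_r. Define the biased MMSE output map E = Γ_2^H [ρI + |D̄|²]^{-1} D̄^H Γ_1^H applied to y = Γ_1 D̄ Γ_2 d + ν. Then E[Γ_1 D̄ Γ_2 d] = Γ_2^H Δ Γ_2 d with Δ = diag{|d̄_r|²/(|d̄_r|²+ρ)}; in particular, if Γ_2 = U_M^H P U_N with U_M, U_N built from normalized DFT matrices, the expected scaling of each data symbol (the diagonal of Γ_2^H Δ Γ_2) equals (1/(MN)) Σ_r |d̄_r|²/(|d̄_r|²+ρ), independent of the symbol index. -/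
/-! Since `Γ₁` is unitary and `D̄` diagonal, the biased MMSE map composed with the channel
collapses to `Γ₂ᴴ Δ Γ₂` with `Δ = (ρ + |D̄|²)⁻¹ |D̄|²`, whose `(i, i)` entry is
`Σ_r |Γ₂ r i|² Δ_r`. In the product `U_Mᴴ P U_N` the shuffle lets exactly one term survive, so
each entry of `Γ₂` is a conjugated entry of `W_M` times an entry of `W_N`, of squared modulus
`1 / (MN)`. -/

open Matrix Complex BigOperators

noncomputable section

namespace Matrix

variable {n : Type*} [Fintype n] [DecidableEq n]

theorem smul_one_add_conjTranspose_diagonal_mul_diagonal (ρ : ℝ) (d : n → ℂ) :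
    (ρ : ℂ) • (1 : Matrix n n ℂ) + (diagonal d)ᴴ * diagonal d =
      diagonal fun r => ((ρ + ‖d r‖ ^ 2 : ℝ) : ℂ) := by
  rw [diagonal_conjTranspose, diagonal_mul_diagonal, ← diagonal_one, ← diagonal_smul,
    diagonal_add]
  congr 1
  funext r
  simp [Complex.conj_mul']

theorem regularized_inv_mul_conjTranspose_diagonal_mul_diagonal {ρ : ℝ} (hρ : 0 < ρ)
    (d : n → ℂ) :
    ((ρ : ℂ) • (1 : Matrix n n ℂ) + (diagonal d)ᴴ * diagonal d)⁻¹ * (diagonal d)ᴴ * diagonal d =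
      diagonal fun r => ((‖d r‖ ^ 2 / (‖d r‖ ^ 2 + ρ) : ℝ) : ℂ) := by
  have hne : ∀ r, ((ρ + ‖d r‖ ^ 2 : ℝ) : ℂ) ≠ 0 := fun r => by
    exact_mod_cast (by positivity : ρ + ‖d r‖ ^ 2 ≠ 0)
  have hinv : (diagonal fun r => ((ρ + ‖d r‖ ^ 2 : ℝ) : ℂ))⁻¹ =
      diagonal fun r => ((ρ + ‖d r‖ ^ 2 : ℝ) : ℂ)⁻¹ := by
    refine inv_eq_left_inv ?_
    rw [diagonal_mul_diagonal, ← diagonal_one]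
    exact congrArg diagonal (funext fun r => inv_mul_cancel₀ (hne r))
  rw [Matrix.mul_assoc, smul_one_add_conjTranspose_diagonal_mul_diagonal, hinv,
    diagonal_conjTranspose, diagonal_mul_diagonal, diagonal_mul_diagonal]
  congr 1
  funext r
  rw [Pi.star_apply, Complex.star_def, Complex.conj_mul']
  push_cast
  field_simp
  ring

theorem conjTranspose_mul_diagonal_mul_apply_self (U : Matrix n n ℂ) (δ : n → ℂ) (i : n)
    {c : ℝ} (hU : ∀ r, ‖U r i‖ ^ 2 = c) :
    (Uᴴ * diagonal δ * U) i i = c * ∑ r, δ r := by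
  rw [mul_apply, Finset.mul_sum]
  refine Finset.sum_congr rfl fun r _ => ?_
  rw [mul_diagonal, conjTranspose_apply, Complex.star_def, mul_right_comm, Complex.conj_mul',
    ← hU r, Complex.ofReal_pow]

theorem biased_mmse_mul_signal {ρ : ℝ} (hρ : 0 < ρ) (d : n → ℂ) {Γ₁ : Matrix n n ℂ}
    (hΓ₁ : Γ₁ ∈ unitaryGroup n ℂ) (Γ₂ : Matrix n n ℂ) :
    (Γ₂ᴴ * ((ρ : ℂ) • (1 : Matrix n n ℂ) + (diagonal d)ᴴ * diagonal d)⁻¹ * (diagonal d)ᴴ * Γ₁ᴴ) *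
        (Γ₁ * diagonal d * Γ₂) =
      Γ₂ᴴ * diagonal (fun r => ((‖d r‖ ^ 2 / (‖d r‖ ^ 2 + ρ) : ℝ) : ℂ)) * Γ₂ := by
  have hΓ₁' : Γ₁ᴴ * Γ₁ = 1 := (mem_unitaryGroup_iff' (A := Γ₁)).mp hΓ₁
  rw [← regularized_inv_mul_conjTranspose_diagonal_mul_diagonal hρ d]
  simp only [Matrix.mul_assoc]
  rw [← Matrix.mul_assoc Γ₁ᴴ, hΓ₁', Matrix.one_mul]

end Matrix

namespace GFDM

variable {M N : ℕ}

theorem sq_norm_W_apply (K : ℕ) (j k : Fin K) : ‖W K j k‖ ^ 2 = 1 / K := by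
  rw [W, norm_mul, Complex.norm_exp]
  simp

theorem sum_divM_modM {R : Type*} [AddCommMonoid R] (f : Fin N → Fin M → R) :
    ∑ l : Fin (M * N), f (divM l) (modM l) = ∑ a, ∑ b, f a b := by
  rw [← Fintype.sum_prod_type', ← (finProdFinEquiv.trans (finCongr (Nat.mul_comm N M))).sum_comp]
  refine Fintype.sum_congr _ _ fun ⟨a, b⟩ => ?_
  have hM : 0 < M := Nat.pos_of_ne_zero fun h => (h ▸ b).elim0
  congr 1 <;> ext
  · simp [divM, Nat.add_mul_div_left _ _ hM, Nat.div_eq_of_lt b.isLt]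
  · simp [modM, Nat.mod_eq_of_lt b.isLt]

theorem P_mul_apply (A : Matrix (Fin (M * N)) (Fin (M * N)) ℂ) (l i : Fin (M * N)) :
    (P M N * A) l i = A (shuffle l) i := by
  have hP : ∀ q, P M N l q = if q = shuffle l then 1 else 0 := fun q => by
    simp [P, shuffle, Fin.ext_iff]
  simp [mul_apply, hP]

theorem divN_shuffle (l : Fin (M * N)) : divN (shuffle l) = modM l := by
  have hN : 0 < N := right_pos l
  ext
  simp [divN, shuffle, modM, Nat.mul_comm _ N, Nat.mul_add_div hN,
    Nat.div_eq_of_lt (Nat.div_lt_of_lt_mul l.isLt)]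

theorem modN_shuffle (l : Fin (M * N)) : modN (shuffle l) = divM l := by
  ext
  simp [modN, shuffle, divM, Nat.mul_comm _ N,
    Nat.mod_eq_of_lt (Nat.div_lt_of_lt_mul l.isLt)]

theorem conjTranspose_UM_mul_P_mul_UN_apply (r i : Fin (M * N)) :
    ((UM M N)ᴴ * P M N * UN M N) r i =
      star (W M (divN i) (modM r)) * W N (divM r) (modN i) := by
  rw [Matrix.mul_assoc, mul_apply]
  simp only [P_mul_apply, conjTranspose_apply]
  simp only [UM, UN, kron, kron', one_apply, divN_shuffle, modN_shuffle]
  rw [sum_divM_modM fun a b => star ((if a = divM r then 1 else 0) * W M b (modM r)) *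
    ((if b = divN i then 1 else 0) * W N a (modN i))]
  simp [apply_ite (starRingEnd ℂ), ite_mul]

theorem sq_norm_conjTranspose_UM_mul_P_mul_UN_apply (r i : Fin (M * N)) :
    ‖((UM M N)ᴴ * P M N * UN M N) r i‖ ^ 2 = 1 / ((M * N : ℕ) : ℝ) := by
  rw [conjTranspose_UM_mul_P_mul_UN_apply, norm_mul, norm_star, mul_pow, sq_norm_W_apply,
    sq_norm_W_apply, one_div_mul_one_div, Nat.cast_mul]

theorem stmt19_general (M N : ℕ) (ρ : ℝ) (hρ : 0 < ρ)
    (db : Fin (M * N) → ℂ) (Γ₁ : Matrix (Fin (M * N)) (Fin (M * N)) ℂ)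
    (hΓ₁ : Γ₁ ∈ Matrix.unitaryGroup (Fin (M * N)) ℂ) :
    ((((UM M N)ᴴ * P M N * UN M N)ᴴ *
        ((ρ : ℂ) • (1 : Matrix (Fin (M * N)) (Fin (M * N)) ℂ) +
          (Matrix.diagonal db)ᴴ * Matrix.diagonal db)⁻¹ *
        (Matrix.diagonal db)ᴴ * Γ₁ᴴ) *
      (Γ₁ * Matrix.diagonal db * ((UM M N)ᴴ * P M N * UN M N)) =
        ((UM M N)ᴴ * P M N * UN M N)ᴴ *
          Matrix.diagonal (fun r : Fin (M * N) =>
            ((‖db r‖ ^ 2 / (‖db r‖ ^ 2 + ρ) : ℝ) : ℂ)) *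
          ((UM M N)ᴴ * P M N * UN M N)) ∧
    ∀ i : Fin (M * N),
      (((UM M N)ᴴ * P M N * UN M N)ᴴ *
          Matrix.diagonal (fun r : Fin (M * N) =>
            ((‖db r‖ ^ 2 / (‖db r‖ ^ 2 + ρ) : ℝ) : ℂ)) *
          ((UM M N)ᴴ * P M N * UN M N)) i i =
        (1 / ((M * N : ℕ) : ℂ)) *
          ∑ r : Fin (M * N), ((‖db r‖ ^ 2 / (‖db r‖ ^ 2 + ρ) : ℝ) : ℂ) := by
  refine ⟨Matrix.biased_mmse_mul_signal hρ db hΓ₁ _, fun i => ?_⟩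
  rw [Matrix.conjTranspose_mul_diagonal_mul_apply_self _ _ i fun r =>
    sq_norm_conjTranspose_UM_mul_P_mul_UN_apply r i]
  push_cast
  rfl

/-- the biased MMSE output map applied to the signal part gives
`Γ₂ᴴ Δ Γ₂ d` with `Δ = diag{|d̄_r|²/(|d̄_r|²+ρ)}`, and for the GFDM
`Γ₂ = U_Mᴴ P U_N` the diagonal of `Γ₂ᴴ Δ Γ₂` is the constant
`(1/(MN)) Σ_r |d̄_r|²/(|d̄_r|²+ρ)`. -/
theorem stmt19 (M N : ℕ) (hM : 0 < M) (hN : 0 < N) (ρ : ℝ) (hρ : 0 < ρ)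
    (db : Fin (M * N) → ℂ) (Γ₁ : Matrix (Fin (M * N)) (Fin (M * N)) ℂ)
    (hΓ₁ : Γ₁ ∈ Matrix.unitaryGroup (Fin (M * N)) ℂ) :
    ((((UM M N)ᴴ * P M N * UN M N)ᴴ *
        ((ρ : ℂ) • (1 : Matrix (Fin (M * N)) (Fin (M * N)) ℂ) +
          (Matrix.diagonal db)ᴴ * Matrix.diagonal db)⁻¹ *
        (Matrix.diagonal db)ᴴ * Γ₁ᴴ) *
      (Γ₁ * Matrix.diagonal db * ((UM M N)ᴴ * P M N * UN M N)) =
        ((UM M N)ᴴ * P M N * UN M N)ᴴ *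
          Matrix.diagonal (fun r : Fin (M * N) =>
            ((‖db r‖ ^ 2 / (‖db r‖ ^ 2 + ρ) : ℝ) : ℂ)) *
          ((UM M N)ᴴ * P M N * UN M N)) ∧
    ∀ i : Fin (M * N),
      (((UM M N)ᴴ * P M N * UN M N)ᴴ *
          Matrix.diagonal (fun r : Fin (M * N) =>
            ((‖db r‖ ^ 2 / (‖db r‖ ^ 2 + ρ) : ℝ) : ℂ)) *
          ((UM M N)ᴴ * P M N * UN M N)) i i =
        (1 / ((M * N : ℕ) : ℂ)) *
          ∑ r : Fin (M * N), ((‖db r‖ ^ 2 / (‖db r‖ ^ 2 + ρ) : ℝ) : ℂ) :=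
  stmt19_general M N ρ hρ db Γ₁ hΓ₁

end GFDM
end
end
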